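/- Let X be a Banach space and C a norm-bounded subset of X*. Suppose (C, d) is a complete metric space, the identity map (C, d) → (C, weak*) is continuous, and (C, d) has the w*-uniform separation property in X*. Let f : (C,d) → ℝ ∪ {+∞} be proper, bounded below and lower semicontinuous. Then there exists a σ-porous subset F of X such that for every x ∈ X \ F, the function p ↦ f(p) + ⟨p, x⟩ has a strong minimum on (C, d). -/

import Mathlib

/-!
Let `Sδ(x)` be the set of `δ`-minimizers of `f + ⟨·, x⟩` on `C`. Whenever the `d`-diameter of
`Sδ(x)` tends to `0` with `δ`, a minimizing sequence is `d`-Cauchy, and its limit is a strong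
minimum by lower semicontinuity of `f` and weak* continuity of `p ↦ ⟨p, x⟩`. So the exceptional set
is `⋃ₙ Fₙ`, where `Fₙ` consists of the `x` for which no `Sδ(x)` has diameter `≤ 2εₙ`. Each `Fₙ` is
porous: in a ball `B(x, r)` take a near-minimizer `p` at `x` and the vector `z` the w*-USP attaches
to `p`; tilting to `x - (r/2) z` lowers the value at `p` by `rϖ/2` more than at any `q` with
`d(q, p) ≥ εₙ`, so at every point of a ball of radius proportional to `r` around `x - (r/2) z` all
near-minimizers are `εₙ`-close to `p`.
-/

open Metric Set Filter

/-- A set `A` is porous in the metric space `X`. -/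
def Porous {X : Type*} [MetricSpace X] (A : Set X) : Prop :=
  ∃ l : ℝ, l ∈ Set.Ioc (0 : ℝ) 1 ∧ ∃ r₀ > (0 : ℝ), ∀ x : X, ∀ r ∈ Set.Ioc (0 : ℝ) r₀,
    ∃ y : X, Metric.ball y (l * r) ⊆ Metric.ball x r ∩ Aᶜ

/-- A set is σ-porous if it is a countable union of porous sets. -/
def SigmaPorous {X : Type*} [MetricSpace X] (A : Set X) : Prop :=
  ∃ s : ℕ → Set X, (∀ n, Porous (s n)) ∧ A = ⋃ n, s n

open Topology

lemma tendsto_comp_of_forall_abs_sub_lt {α ι : Type*} {C : Set α} {d : α → α → ℝ} {v : α → ℝ}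
    {p : α} {l : Filter ι} {q : ι → α}
    (hv : ∀ ε > (0 : ℝ), ∃ η > (0 : ℝ), ∀ q ∈ C, d q p < η → |v q - v p| < ε)
    (hq : ∀ n, q n ∈ C) (hlim : Tendsto (fun n => d (q n) p) l (𝓝 0)) :
    Tendsto (fun n => v (q n)) l (𝓝 (v p)) := by
  refine Metric.tendsto_nhds.2 fun ε hε => ?_
  obtain ⟨η, hη, hvη⟩ := hv ε hε
  filter_upwards [Metric.tendsto_nhds.1 hlim η hη] with n hn
  rw [Real.dist_eq, sub_zero] at hn
  exact (Real.dist_eq _ _).trans_lt (hvη _ (hq n) (abs_lt.1 hn).2)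

section NearMinimizers

variable {α : Type*}

def nearMinimizers (C : Set α) (g : α → EReal) (δ : ℝ) : Set α :=
  {p ∈ C | g p ≤ sInf (g '' C) + δ}

def NearMinimizersDiamLE (d : α → α → ℝ) (C : Set α) (g : α → EReal) (e : ℝ) : Prop :=
  ∃ δ > 0, ∀ p ∈ nearMinimizers C g δ, ∀ q ∈ nearMinimizers C g δ, d p q ≤ e

def IsStrongMinOn (d : α → α → ℝ) (C : Set α) (g : α → EReal) (u : α) : Prop :=
  u ∈ C ∧ g u = sInf (g '' C) ∧ ∀ q : ℕ → α, (∀ n, q n ∈ C) →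
    Tendsto (fun n => g (q n)) atTop (𝓝 (sInf (g '' C))) →
    Tendsto (fun n => d (q n) u) atTop (𝓝 0)

variable {C : Set α} {g : α → EReal} {d : α → α → ℝ} {t δ e : ℝ}

lemma nearMinimizers_nonempty (ht : sInf (g '' C) = t) (hδ : 0 < δ) :
    (nearMinimizers C g δ).Nonempty := by
  have : sInf (g '' C) < sInf (g '' C) + δ := by
    rw [ht]; exact_mod_cast lt_add_of_pos_right t hδ
  obtain ⟨_, ⟨p, hp, rfl⟩, hlt⟩ := sInf_lt_iff.1 this
  exact ⟨p, hp, hlt.le⟩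

lemma mem_nearMinimizers_of_eq_sInf {u : α} (hu : u ∈ C) (hgu : g u = sInf (g '' C))
    (ht : sInf (g '' C) = t) (hδ : 0 ≤ δ) : u ∈ nearMinimizers C g δ := by
  refine ⟨hu, ?_⟩
  rw [hgu, ht]
  exact_mod_cast le_add_of_nonneg_right hδ

lemma eventually_mem_nearMinimizers {ι : Type*} {l : Filter ι} {q : ι → α}
    (ht : sInf (g '' C) = t) (hq : ∀ n, q n ∈ C)
    (hlim : Tendsto (fun n => g (q n)) l (𝓝 (sInf (g '' C)))) (hδ : 0 < δ) :
    ∀ᶠ n in l, q n ∈ nearMinimizers C g δ := by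
  have : sInf (g '' C) < sInf (g '' C) + δ := by
    rw [ht]; exact_mod_cast lt_add_of_pos_right t hδ
  filter_upwards [hlim.eventually_lt_const this] with n hn
  exact ⟨hq n, hn.le⟩

lemma NearMinimizersDiamLE.mono {e' : ℝ} (h : NearMinimizersDiamLE d C g e) (he : e ≤ e') :
    NearMinimizersDiamLE d C g e' :=
  let ⟨δ, hδ, hdiam⟩ := h
  ⟨δ, hδ, fun p hp q hq => (hdiam p hp q hq).trans he⟩

lemma nearMinimizersDiamLE_two_mul {p : α} (hp : p ∈ C)
    (hdsymm : ∀ p ∈ C, ∀ q ∈ C, d p q = d q p)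
    (hdtri : ∀ p ∈ C, ∀ q ∈ C, ∀ r ∈ C, d p q ≤ d p r + d r q) (hδ : 0 < δ)
    (hclose : ∀ q ∈ nearMinimizers C g δ, d q p < e) : NearMinimizersDiamLE d C g (2 * e) := by
  refine ⟨δ, hδ, fun q₁ hq₁ q₂ hq₂ => ?_⟩
  have := hdtri q₁ hq₁.1 q₂ hq₂.1 p hp
  linarith [hclose q₁ hq₁, hclose q₂ hq₂, hdsymm p hp q₂ hq₂.1]

theorem exists_isStrongMinOn_of_nearMinimizersDiamLE
    (hd : ∀ p ∈ C, ∀ q ∈ C, 0 ≤ d p q)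
    (hcomplete : ∀ u : ℕ → α, (∀ n, u n ∈ C) →
      (∀ ε > (0 : ℝ), ∃ N : ℕ, ∀ m ≥ N, ∀ n ≥ N, d (u m) (u n) < ε) →
      ∃ l ∈ C, Tendsto (fun n => d (u n) l) atTop (𝓝 0))
    (hlsc : ∀ p ∈ C, ∀ q : ℕ → α, (∀ n, q n ∈ C) →
      Tendsto (fun n => d (q n) p) atTop (𝓝 0) → g p ≤ liminf (fun n => g (q n)) atTop)
    (ht : sInf (g '' C) = t) (hdiam : ∀ e > 0, NearMinimizersDiamLE d C g e) :
    ∃ u, IsStrongMinOn d C g u := by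
  obtain ⟨w, hwC, hw⟩ : ∃ w : ℕ → α, (∀ n, w n ∈ C) ∧
      Tendsto (fun n => g (w n)) atTop (𝓝 (sInf (g '' C))) := by
    have hne : (g '' C).Nonempty := by
      by_contra h
      rw [not_nonempty_iff_eq_empty.1 h, sInf_empty] at ht
      exact EReal.coe_ne_top t ht.symm
    obtain ⟨v, -, hv, hvC⟩ := exists_seq_tendsto_sInf hne (OrderBot.bddBelow _)
    choose w hwC hw using hvC
    exact ⟨w, hwC, by simpa only [hw] using hv⟩
  have hcauchy : ∀ ε > (0 : ℝ), ∃ N : ℕ, ∀ m ≥ N, ∀ n ≥ N, d (w m) (w n) < ε := by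
    intro ε hε
    obtain ⟨δ, hδ, hdiamδ⟩ := hdiam (ε / 2) (by positivity)
    obtain ⟨N, hN⟩ := eventually_atTop.1 (eventually_mem_nearMinimizers ht hwC hw hδ)
    exact ⟨N, fun m hm n hn => (hdiamδ _ (hN m hm) _ (hN n hn)).trans_lt (half_lt_self hε)⟩
  obtain ⟨u, huC, hwu⟩ := hcomplete w hwC hcauchy
  have hgu : g u = sInf (g '' C) :=
    le_antisymm ((hlsc u huC w hwC hwu).trans_eq hw.liminf_eq) (sInf_le (mem_image_of_mem g huC))
  refine ⟨u, huC, hgu, fun q hqC hq => Metric.tendsto_nhds.2 fun ε hε => ?_⟩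
  obtain ⟨δ, hδ, hdiamδ⟩ := hdiam (ε / 2) (by positivity)
  filter_upwards [eventually_mem_nearMinimizers ht hqC hq hδ] with n hn
  rw [Real.dist_eq, sub_zero, abs_of_nonneg (hd _ (hqC n) _ huC)]
  exact (hdiamδ _ hn _ (mem_nearMinimizers_of_eq_sInf huC hgu ht hδ.le)).trans_lt
    (half_lt_self hε)

end NearMinimizers

section Tilt

variable {X : Type*} [NormedAddCommGroup X] [NormedSpace ℝ X] {C : Set (StrongDual ℝ X)}
  {f : StrongDual ℝ X → EReal} {d : StrongDual ℝ X → StrongDual ℝ X → ℝ} {D t δ δ' ε ϖ : ℝ}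

noncomputable def tilt (f : StrongDual ℝ X → EReal) (x : X) (p : StrongDual ℝ X) : EReal :=
  f p + ((p x : ℝ) : EReal)

lemma tilt_add (x w : X) (p : StrongDual ℝ X) :
    tilt f (x + w) p = tilt f x p + ((p w : ℝ) : EReal) := by
  rw [tilt, tilt, map_add, EReal.coe_add, add_assoc]

lemma exists_sInf_tilt_eq_coe (hD : ∀ p ∈ C, ‖p‖ ≤ D) (hproper : ∃ p ∈ C, f p ≠ ⊤)
    (hbelow : ∃ m : ℝ, ∀ p ∈ C, (m : EReal) ≤ f p) (x : X) :
    ∃ t : ℝ, sInf (tilt f x '' C) = t := by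
  obtain ⟨p₀, hp₀, hfp₀⟩ := hproper
  obtain ⟨m, hm⟩ := hbelow
  have hlow : ((m + -(D * ‖x‖) : ℝ) : EReal) ≤ sInf (tilt f x '' C) := by
    refine le_sInf (forall_mem_image.2 fun p hp => ?_)
    have hpx := p.le_of_opNorm_le (hD p hp) x
    rw [Real.norm_eq_abs] at hpx
    rw [EReal.coe_add]
    exact add_le_add (hm p hp) (EReal.coe_le_coe_iff.2 (by linarith [neg_abs_le (p x)]))
  have hup : sInf (tilt f x '' C) < ⊤ :=
    (sInf_le (mem_image_of_mem _ hp₀)).trans_lt (EReal.add_lt_top hfp₀ (EReal.coe_ne_top _))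
  exact ⟨_, (EReal.coe_toReal hup.ne (ne_bot_of_le_ne_bot (EReal.coe_ne_bot _) hlow)).symm⟩

lemma apply_le_of_mem_nearMinimizers_tilt {x w : X} {p q : StrongDual ℝ X}
    (ht : sInf (tilt f x '' C) = t) (hp : p ∈ nearMinimizers C (tilt f x) δ)
    (hq : q ∈ nearMinimizers C (tilt f (x + w)) δ') : q w ≤ p w + δ + δ' := by
  have key : ((t + q w : ℝ) : EReal) ≤ ((t + δ + p w + δ' : ℝ) : EReal) :=
    calc ((t + q w : ℝ) : EReal) = sInf (tilt f x '' C) + q w := by rw [ht, EReal.coe_add]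
      _ ≤ tilt f (x + w) q := by
        rw [tilt_add]; exact add_le_add_left (sInf_le (mem_image_of_mem _ hq.1)) _
      _ ≤ sInf (tilt f (x + w) '' C) + δ' := hq.2
      _ ≤ tilt f x p + p w + δ' := by
        rw [← tilt_add]; exact add_le_add_left (sInf_le (mem_image_of_mem _ hp.1)) _
      _ ≤ sInf (tilt f x '' C) + δ + p w + δ' := by gcongr; exact hp.2
      _ = ((t + δ + p w + δ' : ℝ) : EReal) := by rw [ht]; norm_cast
  linarith [EReal.coe_le_coe_iff.1 key]

lemma lt_of_mem_nearMinimizers_tilt_of_separating {x y z : X} {p q : StrongDual ℝ X} {s η : ℝ}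
    (hD : ∀ p ∈ C, ‖p‖ ≤ D) (ht : sInf (tilt f x '' C) = t)
    (hp : p ∈ nearMinimizers C (tilt f x) δ) (hz : ∀ q ∈ C, ε ≤ d q p → q z ≤ p z - ϖ)
    (hs : 0 ≤ s) (hy : ‖y - (x - s • z)‖ ≤ η) (hslack : 2 * D * η + δ + δ' < s * ϖ)
    (hq : q ∈ nearMinimizers C (tilt f y) δ') : d q p < ε := by
  by_contra! hfar
  obtain ⟨w, rfl⟩ : ∃ w, y = x - s • z + w := ⟨y - (x - s • z), by abel⟩
  rw [add_sub_cancel_left] at hy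
  have hbound : ∀ r ∈ C, |r w| ≤ D * η := fun r hr =>
    calc |r w| ≤ D * ‖w‖ := by rw [← Real.norm_eq_abs]; exact r.le_of_opNorm_le (hD r hr) w
      _ ≤ D * η := mul_le_mul_of_nonneg_left hy ((norm_nonneg r).trans (hD r hr))
  have key := apply_le_of_mem_nearMinimizers_tilt (w := w - s • z) ht hp
    (by rwa [show x + (w - s • z) = x - s • z + w by abel])
  simp only [map_sub, map_smul, smul_eq_mul] at key
  have := mul_le_mul_of_nonneg_left (hz q hq.1 hfar) hs
  linarith [abs_le.1 (hbound q hq.1), abs_le.1 (hbound p hp.1)]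

theorem porous_setOf_not_nearMinimizersDiamLE_tilt (hD : ∀ p ∈ C, ‖p‖ ≤ D)
    (hproper : ∃ p ∈ C, f p ≠ ⊤) (hbelow : ∃ m : ℝ, ∀ p ∈ C, (m : EReal) ≤ f p)
    (hdsymm : ∀ p ∈ C, ∀ q ∈ C, d p q = d q p)
    (hdtri : ∀ p ∈ C, ∀ q ∈ C, ∀ r ∈ C, d p q ≤ d p r + d r q) (hϖ : 0 < ϖ)
    (hsep : ∀ p ∈ C, ∃ z : X, ‖z‖ ≤ 1 ∧ ∀ q ∈ C, ε ≤ d q p → q z ≤ p z - ϖ) :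
    Porous {x : X | ¬ NearMinimizersDiamLE d C (tilt f x) (2 * ε)} := by
  have hD0 : 0 ≤ D := let ⟨p₀, hp₀, _⟩ := hproper; (norm_nonneg p₀).trans (hD p₀ hp₀)
  -- `l ≤ 1/2` keeps `ball (x - (r/2) • z) (l * r)` inside `ball x r`, and `16 (D + 1) l ≤ ϖ` makes
  -- the slack `2 D (l r) + 2 (r ϖ / 8)` smaller than `(r/2) ϖ`.
  set l := min (1 / 2) (ϖ / (16 * (D + 1)))
  have hl0 : 0 < l := lt_min (by norm_num) (by positivity)
  have hl_half : l ≤ 1 / 2 := min_le_left _ _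
  have hlϖ : 16 * (D + 1) * l ≤ ϖ := (le_div_iff₀' (by positivity)).1 (min_le_right _ _)
  refine ⟨l, ⟨hl0, hl_half.trans (by norm_num)⟩, 1, one_pos, fun x r ⟨hr, _⟩ => ?_⟩
  obtain ⟨t, ht⟩ := exists_sInf_tilt_eq_coe hD hproper hbelow x
  obtain ⟨p, hp⟩ := nearMinimizers_nonempty ht (δ := r * ϖ / 8) (by positivity)
  obtain ⟨z, hz1, hz⟩ := hsep p hp.1
  refine ⟨x - (r / 2) • z, fun y hy => ⟨?_, fun hbad => hbad ?_⟩⟩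
  · have hshift : dist (x - (r / 2) • z) x ≤ r / 2 := by
      rw [dist_self_sub_left, norm_smul, Real.norm_of_nonneg (by positivity)]
      exact mul_le_of_le_one_right (by positivity) hz1
    calc dist y x ≤ dist y (x - (r / 2) • z) + dist (x - (r / 2) • z) x := dist_triangle _ _ _
      _ < l * r + r / 2 := add_lt_add_of_lt_of_le hy hshift
      _ ≤ r := by nlinarith
  · refine nearMinimizersDiamLE_two_mul hp.1 hdsymm hdtri (δ := r * ϖ / 8) (by positivity)
      fun q hq => lt_of_mem_nearMinimizers_tilt_of_separating hD ht hp hz (by positivity)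
        (mem_ball_iff_norm.1 hy).le ?_ hq
    nlinarith [mul_le_mul_of_nonneg_left hlϖ hr.le, mul_nonneg hl0.le hr.le]

lemma le_liminf_tilt {ι : Type*} {x : X} {p : StrongDual ℝ X} {l : Filter ι}
    {q : ι → StrongDual ℝ X} (hf : f p ≤ liminf (fun n => f (q n)) l)
    (hx : Tendsto (fun n => q n x) l (𝓝 (p x))) :
    tilt f x p ≤ liminf (fun n => tilt f x (q n)) l := by
  rcases l.eq_or_neBot with rfl | _
  · simp
  calc tilt f x p = f p + liminf (fun n => ((q n x : ℝ) : EReal)) l := by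
        rw [tilt, (EReal.tendsto_coe.2 hx).liminf_eq]
    _ ≤ liminf (fun n => f (q n)) l + liminf (fun n => ((q n x : ℝ) : EReal)) l :=
        add_le_add_left hf _
    _ ≤ liminf (fun n => tilt f x (q n)) l := EReal.le_liminf_add

end Tilt

theorem strong_minimum_off_sigma_porous_general
    {X : Type*} [NormedAddCommGroup X] [NormedSpace ℝ X]
    (C : Set (StrongDual ℝ X))
    (d : StrongDual ℝ X → StrongDual ℝ X → ℝ)
    (hbdd : ∃ D : ℝ, ∀ p ∈ C, ‖p‖ ≤ D)
    (hd0 : ∀ p ∈ C, d p p = 0)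
    (hdsymm : ∀ p ∈ C, ∀ q ∈ C, d p q = d q p)
    (hdtri : ∀ p ∈ C, ∀ q ∈ C, ∀ r ∈ C, d p q ≤ d p r + d r q)
    (hcomplete : ∀ u : ℕ → StrongDual ℝ X, (∀ n, u n ∈ C) →
      (∀ ε > (0 : ℝ), ∃ N : ℕ, ∀ m ≥ N, ∀ n ≥ N, d (u m) (u n) < ε) →
      ∃ l ∈ C, Tendsto (fun n => d (u n) l) atTop (nhds 0))
    (hwcont : ∀ p ∈ C, ∀ x : X, ∀ ε > (0 : ℝ), ∃ η > (0 : ℝ), ∀ q ∈ C,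
      d q p < η → |q x - p x| < ε)
    (hUSP : ∃ a > (0 : ℝ), ∀ ε ∈ Set.Ioc (0 : ℝ) a, ∃ ϖ > (0 : ℝ), ∀ p ∈ C,
      ∃ x : X, ‖x‖ ≤ 1 ∧ ∀ q ∈ C, ε ≤ d q p → q x ≤ p x - ϖ)
    (f : StrongDual ℝ X → EReal)
    (hproper : ∃ p ∈ C, f p ≠ ⊤)
    (hbelow : ∃ m : ℝ, ∀ p ∈ C, (m : EReal) ≤ f p)
    (hlsc : ∀ p ∈ C, ∀ q : ℕ → StrongDual ℝ X, (∀ n, q n ∈ C) →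
      Tendsto (fun n => d (q n) p) atTop (nhds 0) →
      f p ≤ Filter.liminf (fun n => f (q n)) atTop) :
    ∃ F : Set X, SigmaPorous F ∧ ∀ x ∉ F, ∃ u ∈ C,
      (f u + ((u x : ℝ) : EReal) = sInf ((fun p => f p + ((p x : ℝ) : EReal)) '' C)) ∧
      ∀ q : ℕ → StrongDual ℝ X, (∀ n, q n ∈ C) →
        Tendsto (fun n => f (q n) + ((q n x : ℝ) : EReal)) atTop
          (nhds (sInf ((fun p => f p + ((p x : ℝ) : EReal)) '' C))) →
        Tendsto (fun n => d (q n) u) atTop (nhds 0) := by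
  obtain ⟨D, hD⟩ := hbdd
  obtain ⟨a, ha, hUSP⟩ := hUSP
  have hε : ∀ n : ℕ, a / (n + 1) ∈ Ioc 0 a := fun n =>
    ⟨by positivity, div_le_self ha.le (by linarith [n.cast_nonneg (α := ℝ)])⟩
  choose ϖ hϖ hsep using fun n : ℕ => hUSP _ (hε n)
  refine ⟨⋃ n : ℕ, {x | ¬ NearMinimizersDiamLE d C (tilt f x) (2 * (a / (n + 1)))},
    ⟨_, fun n => porous_setOf_not_nearMinimizersDiamLE_tilt hD hproper hbelow hdsymm hdtri
      (hϖ n) (hsep n), rfl⟩, fun x hx => ?_⟩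
  obtain ⟨t, ht⟩ := exists_sInf_tilt_eq_coe hD hproper hbelow x
  have hdiam : ∀ e > 0, NearMinimizersDiamLE d C (tilt f x) e := fun e he => by
    have hlim : Tendsto (fun n : ℕ => 2 * (a / (n + 1))) atTop (𝓝 0) := by
      simpa [div_eq_mul_inv, mul_assoc] using
        (tendsto_one_div_add_atTop_nhds_zero_nat (𝕜 := ℝ)).const_mul (2 * a)
    obtain ⟨n, hn⟩ := (hlim.eventually (gt_mem_nhds he)).exists
    simp only [mem_iUnion, not_exists] at hx
    exact (not_not.1 (hx n)).mono hn.le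
  exact exists_isStrongMinOn_of_nearMinimizersDiamLE
    (fun p hp q hq => by linarith [hdtri p hp p hp q hq, hd0 p hp, hdsymm p hp q hq]) hcomplete
    (fun p hp q hq hlim => le_liminf_tilt (hlsc p hp q hq hlim)
      (tendsto_comp_of_forall_abs_sub_lt (hwcont p hp x) hq hlim)) ht hdiam

/-- if `(C,d)` is a complete metric space, norm-bounded in `X*`, the identity
`(C,d) → (C,weak*)` is continuous, `(C,d)` has the w*-USP, and `f` is proper, bounded below and
lower semicontinuous on `(C,d)`, then off a σ-porous set `F ⊆ X`, `p ↦ f(p) + ⟨p,x⟩` has a strong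
minimum on `(C,d)`. -/
theorem strong_minimum_off_sigma_porous
    {X : Type*} [NormedAddCommGroup X] [NormedSpace ℝ X] [CompleteSpace X]
    (C : Set (StrongDual ℝ X))
    (d : StrongDual ℝ X → StrongDual ℝ X → ℝ)
    (hbdd : ∃ D : ℝ, ∀ p ∈ C, ‖p‖ ≤ D)
    (hd0 : ∀ p ∈ C, d p p = 0)
    (hdsep : ∀ p ∈ C, ∀ q ∈ C, d p q = 0 → p = q)
    (hdsymm : ∀ p ∈ C, ∀ q ∈ C, d p q = d q p)
    (hdtri : ∀ p ∈ C, ∀ q ∈ C, ∀ r ∈ C, d p q ≤ d p r + d r q)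
    (hcomplete : ∀ u : ℕ → StrongDual ℝ X, (∀ n, u n ∈ C) →
      (∀ ε > (0 : ℝ), ∃ N : ℕ, ∀ m ≥ N, ∀ n ≥ N, d (u m) (u n) < ε) →
      ∃ l ∈ C, Tendsto (fun n => d (u n) l) atTop (nhds 0))
    (hwcont : ∀ p ∈ C, ∀ x : X, ∀ ε > (0 : ℝ), ∃ η > (0 : ℝ), ∀ q ∈ C,
      d q p < η → |q x - p x| < ε)
    (hUSP : ∃ a > (0 : ℝ), ∀ ε ∈ Set.Ioc (0 : ℝ) a, ∃ ϖ > (0 : ℝ), ∀ p ∈ C,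
      ∃ x : X, ‖x‖ ≤ 1 ∧ ∀ q ∈ C, ε ≤ d q p → q x ≤ p x - ϖ)
    (f : StrongDual ℝ X → EReal)
    (hproper : ∃ p ∈ C, f p ≠ ⊤)
    (hbelow : ∃ m : ℝ, ∀ p ∈ C, (m : EReal) ≤ f p)
    (hlsc : ∀ p ∈ C, ∀ q : ℕ → StrongDual ℝ X, (∀ n, q n ∈ C) →
      Tendsto (fun n => d (q n) p) atTop (nhds 0) →
      f p ≤ Filter.liminf (fun n => f (q n)) atTop) :
    ∃ F : Set X, SigmaPorous F ∧ ∀ x ∉ F, ∃ u ∈ C,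
      (f u + ((u x : ℝ) : EReal) = sInf ((fun p => f p + ((p x : ℝ) : EReal)) '' C)) ∧
      ∀ q : ℕ → StrongDual ℝ X, (∀ n, q n ∈ C) →
        Tendsto (fun n => f (q n) + ((q n x : ℝ) : EReal)) atTop
          (nhds (sInf ((fun p => f p + ((p x : ℝ) : EReal)) '' C))) →
        Tendsto (fun n => d (q n) u) atTop (nhds 0) :=
  strong_minimum_off_sigma_porous_general C d hbdd hd0 hdsymm hdtri hcomplete hwcont hUSP f hproper
    hbelow hlsc
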